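/- For every n ≥ 3, the Roman domination number of the cycle C_n equals ⌈2n/3⌉. -/

import Mathlib

variable {V : Type*}

/-- A Roman dominating function: every vertex with value 0 has a neighbor with value 2. -/
def IsRDF (G : SimpleGraph V) (f : V → Fin 3) : Prop :=
  ∀ v, f v = 0 → ∃ u, G.Adj u v ∧ f u = 2

/-- The weight of a Roman dominating function. -/
def romanWeight [Fintype V] (f : V → Fin 3) : ℕ := ∑ v, (f v : ℕ)

/-- The Roman domination number. -/
noncomputable def gammaR [Fintype V] (G : SimpleGraph V) : ℕ :=
  sInf {k | ∃ f : V → Fin 3, IsRDF G f ∧ romanWeight f = k}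

/-- A dominating set. -/
def IsDomSet (G : SimpleGraph V) (D : Set V) : Prop :=
  ∀ v, v ∈ D ∨ ∃ u ∈ D, G.Adj u v

/-- The domination number. -/
noncomputable def gamma [Fintype V] (G : SimpleGraph V) : ℕ :=
  sInf {k | ∃ D : Set V, IsDomSet G D ∧ D.ncard = k}

/-- The generalized Sierpiński graph `S(G,t)` on words of length `t` over `V`. -/
def sierpinski (G : SimpleGraph V) (t : ℕ) : SimpleGraph (Fin t → V) where
  Adj x y := ∃ i : Fin t, (∀ j, j < i → x j = y j) ∧ G.Adj (x i) (y i) ∧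
    (∀ j, i < j → x j = y i ∧ y j = x i)
  symm := by
    constructor
    rintro x y ⟨i, h1, h2, h3⟩
    exact ⟨i, fun j hj => (h1 j hj).symm, h2.symm, fun j hj => ⟨(h3 j hj).2, (h3 j hj).1⟩⟩
  loopless := by
    constructor
    rintro x ⟨i, -, h2, -⟩
    exact G.irrefl h2

/-!
A vertex of weight `2` Roman-dominates itself and its at most two neighbours, a vertex of weight
`1` only itself; hence `n ≤ |V₁| + 3 |V₂|` and `3 w(f) ≥ 2n` for every Roman dominating function
`f` of `C_n`. Conversely, weight `2` on the vertices `i ≡ 1 (mod 3)` of the path `P_n ≤ C_n`, plus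
weight `1` on the last vertex when `n ≡ 1 (mod 3)`, is Roman dominating of weight
`⌊(2n + 2)/3⌋ = ⌈2n/3⌉`.
-/

open Finset SimpleGraph

section RomanDomination

variable {G H : SimpleGraph V} {f : V → Fin 3}

theorem IsRDF.mono (hGH : G ≤ H) (hf : IsRDF G f) : IsRDF H f := fun v hv ↦
  let ⟨u, hadj, hu⟩ := hf v hv
  ⟨u, hGH hadj, hu⟩

variable [Fintype V]

theorem gammaR_le (hf : IsRDF G f) : gammaR G ≤ romanWeight f :=
  Nat.sInf_le ⟨f, hf, rfl⟩

theorem exists_isRDF_romanWeight_eq_gammaR (G : SimpleGraph V) :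
    ∃ f, IsRDF G f ∧ romanWeight f = gammaR G :=
  Nat.sInf_mem (s := {k | ∃ f : V → Fin 3, IsRDF G f ∧ romanWeight f = k})
    ⟨_, fun _ ↦ 1, fun _ h ↦ by simp at h, rfl⟩

theorem card_eq_card_filter_add_card_filter_add_card_filter (f : V → Fin 3) :
    Fintype.card V = #{v | f v = 0} + #{v | f v = 1} + #{v | f v = 2} := by
  rw [← card_univ, card_eq_sum_card_fiberwise (f := f) (t := univ) fun _ _ ↦ mem_univ _,
    Fin.sum_univ_three]

theorem romanWeight_eq_card_filter (f : V → Fin 3) :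
    romanWeight f = #{v | f v = 1} + 2 * #{v | f v = 2} := by
  simp only [romanWeight, card_filter, mul_sum, ← sum_add_distrib]
  refine sum_congr rfl fun v _ ↦ ?_
  generalize f v = x
  fin_cases x <;> rfl

theorem IsRDF.card_filter_eq_zero_le [DecidableEq V] [DecidableRel G.Adj] {d : ℕ}
    (hf : IsRDF G f) (hd : ∀ v, G.degree v ≤ d) :
    #{v | f v = 0} ≤ d * #{v | f v = 2} := by
  have hcover :
      ({v | f v = 0} : Finset V) ⊆ ({v | f v = 2} : Finset V).biUnion fun u ↦ G.neighborFinset u := by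
    intro v hv
    obtain ⟨u, hadj, hu⟩ := hf v (mem_filter.1 hv).2
    exact mem_biUnion.2 ⟨u, by simp [hu], (G.mem_neighborFinset u v).2 hadj⟩
  calc #{v | f v = 0} ≤ ∑ u ∈ {v | f v = 2}, #(G.neighborFinset u) :=
        (card_le_card hcover).trans card_biUnion_le
    _ ≤ ∑ _u ∈ {v | f v = 2}, d := sum_le_sum fun u _ ↦ hd u
    _ = d * #{v | f v = 2} := by rw [sum_const, smul_eq_mul, mul_comm]

theorem IsRDF.two_mul_card_le_mul_romanWeight [DecidableEq V] [DecidableRel G.Adj] {d : ℕ}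
    (hf : IsRDF G f) (hd : ∀ v, G.degree v ≤ d) (hd₁ : 1 ≤ d) :
    2 * Fintype.card V ≤ (d + 1) * romanWeight f := by
  have hzero := hf.card_filter_eq_zero_le hd
  rw [card_eq_card_filter_add_card_filter_add_card_filter f, romanWeight_eq_card_filter]
  nlinarith

end RomanDomination

theorem cycleGraph_degree_le_two {n : ℕ} (v : Fin n) : (cycleGraph n).degree v ≤ 2 := by
  match n with
  | 0 => exact v.elim0
  | 1 => simp [cycleGraph_one_eq_bot]
  | _ + 2 => exact cycleGraph_degree_two_le.trans_le card_le_two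

def pathRDF (n : ℕ) (v : Fin n) : Fin 3 :=
  if v.val % 3 = 1 then 2 else if v.val % 3 = 0 ∧ v.val + 1 = n then 1 else 0

theorem isRDF_pathRDF (n : ℕ) : IsRDF (pathGraph n) (pathRDF n) := by
  intro v hv
  have h₁ : v.val % 3 ≠ 1 := fun h ↦ by simp [pathRDF, h] at hv
  have h₂ : ¬(v.val % 3 = 0 ∧ v.val + 1 = n) := fun h ↦ by simp [pathRDF, h] at hv
  have hv_lt := v.isLt
  obtain h | h : v.val % 3 = 0 ∨ v.val % 3 = 2 := by omega
  · refine ⟨⟨v + 1, by omega⟩, pathGraph_adj.2 (Or.inr rfl), ?_⟩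
    rw [pathRDF, if_pos (by dsimp only; omega)]
  · refine ⟨⟨v - 1, by omega⟩, pathGraph_adj.2 (Or.inl (by dsimp only; omega)), ?_⟩
    rw [pathRDF, if_pos (by dsimp only; omega)]

theorem sum_range_ite_mod_three_eq_one (n : ℕ) :
    ∑ i ∈ range n, (if i % 3 = 1 then 2 else 0) = 2 * ((n + 1) / 3) := by
  induction n with
  | zero => rfl
  | succ n ih =>
    rw [sum_range_succ, ih]
    split_ifs <;> omega

theorem romanWeight_pathRDF (n : ℕ) : romanWeight (pathRDF n) = (2 * n + 2) / 3 := by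
  cases n with
  | zero => rfl
  | succ m =>
    have hinit (i : Fin m) :
        (pathRDF (m + 1) i.castSucc : ℕ) = if i.val % 3 = 1 then 2 else 0 := by
      have hi := i.isLt
      simp only [pathRDF, Fin.val_castSucc]
      split_ifs <;> first | rfl | omega
    rw [romanWeight, Fin.sum_univ_castSucc, sum_congr rfl fun i _ ↦ hinit i,
      Fin.sum_univ_eq_sum_range (fun i ↦ if i % 3 = 1 then 2 else 0),
      sum_range_ite_mod_three_eq_one]
    obtain h | h | h : m % 3 = 0 ∨ m % 3 = 1 ∨ m % 3 = 2 := by omega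
    all_goals
      simp only [pathRDF, Fin.val_last, h, zero_ne_one, OfNat.ofNat_ne_one, OfNat.ofNat_ne_zero,
        ↓reduceIte, and_true, Fin.coe_ofNat_eq_mod]
      omega

theorem gammaR_cycleGraph (n : ℕ) : gammaR (cycleGraph n) = (2 * n + 2) / 3 := by
  refine le_antisymm ?_ ?_
  · exact (gammaR_le ((isRDF_pathRDF n).mono pathGraph_le_cycleGraph)).trans_eq
      (romanWeight_pathRDF n)
  · obtain ⟨f, hf, hw⟩ := exists_isRDF_romanWeight_eq_gammaR (cycleGraph n)
    have hbound := hf.two_mul_card_le_mul_romanWeight cycleGraph_degree_le_two one_le_two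
    rw [Fintype.card_fin] at hbound
    omega

theorem stmt4_general (n : ℕ) :
    (gammaR (SimpleGraph.cycleGraph n) : ℤ) = ⌈(2 * n : ℚ) / 3⌉ := by
  rw [gammaR_cycleGraph]
  have hceil := Rat.ceil_natCast_div_natCast (2 * n) 3
  push_cast at hceil
  rw [hceil]
  omega

theorem stmt4 (n : ℕ) (hn : 3 ≤ n) :
    (gammaR (SimpleGraph.cycleGraph n) : ℤ) = ⌈(2 * n : ℚ) / 3⌉ :=
  stmt4_general n
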